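/- Let p and q be relatively prime integers with p ≥ 1 and q ≥ 1. Then the minimal distance in the Farey tree Σ from △^{(0)} to a Farey triangle having p/q as a vertex equals S(p,q) − 1; that is, the unique triangle △_m containing p/q closest to △^{(0)} satisfies d(△_m, △^{(0)}) = S(p,q) − 1. -/

import Mathlib

/-- A Farey vertex is an element of `ℚ ∪ {∞}`; `none` represents `∞`. -/
abbrev FareyVertex := Option ℚ

/-- The numerator of the reduced form `a/b` (with `b ≥ 0`) of a Farey vertex; `∞ = 1/0`. -/
def fnum : FareyVertex → ℤ
  | none => 1
  | some r => r.num

/-- The denominator of the reduced form `a/b` (with `b ≥ 0`) of a Farey vertex; `∞ = 1/0`. -/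
def fden : FareyVertex → ℤ
  | none => 0
  | some r => (r.den : ℤ)

/-- Two Farey vertices with reduced forms `a/b` and `c/d` are Farey-neighbors if `|ad - bc| = 1`. -/
def FareyNeighbor (x y : FareyVertex) : Prop :=
  |fnum x * fden y - fden x * fnum y| = 1

/-- A Farey triangle: a set of three distinct pairwise Farey-neighbor Farey vertices. -/
@[ext]
structure FareyTriangle where
  verts : Finset FareyVertex
  card_eq : verts.card = 3
  neighbors : ∀ x ∈ verts, ∀ y ∈ verts, x ≠ y → FareyNeighbor x y

/-- The Farey tree `Σ`: vertices are the Farey triangles, two triangles being adjacent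
if and only if their intersection has exactly two elements. -/
def fareyTree : SimpleGraph FareyTriangle where
  Adj T T' := (T.verts ∩ T'.verts).card = 2
  symm := by
    constructor
    intro T T' h
    beta_reduce at h ⊢
    rwa [Finset.inter_comm]
  loopless := by
    constructor
    intro T h
    beta_reduce at h
    rw [Finset.inter_self, T.card_eq] at h
    omega

/-- The Farey vertex represented by the (not necessarily reduced) fraction `a/b`,
with the conventions `a/b = (-a)/(-b)` and `x/0 = ∞`. -/
def mkFarey (a b : ℤ) : FareyVertex :=
  if b = 0 then none else some ((a : ℚ) / (b : ℚ))

lemma neighbor_int_succ (i : ℤ) :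
    FareyNeighbor (some (i : ℚ)) (some ((i + 1 : ℤ) : ℚ)) := by
  have hn : (((i + 1 : ℤ) : ℚ)).num = i + 1 := Rat.num_intCast _
  have hd : (((i + 1 : ℤ) : ℚ)).den = 1 := Rat.den_intCast _
  simp only [FareyNeighbor, fnum, fden, hn, hd, Rat.num_intCast, Rat.den_intCast]
  simp

lemma neighbor_int_inf (i : ℤ) : FareyNeighbor (some (i : ℚ)) none := by
  simp [FareyNeighbor, fnum, fden]

lemma neighbor_symm {x y : FareyVertex} (h : FareyNeighbor x y) : FareyNeighbor y x := by
  unfold FareyNeighbor at h ⊢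
  rw [← abs_neg]
  convert h using 2
  ring

/-- `△⁽ⁱ⁾`: the Farey triangle with vertices `i`, `i+1` and `∞`. -/
def stdTriangle (i : ℤ) : FareyTriangle where
  verts := {some (i : ℚ), some ((i + 1 : ℤ) : ℚ), none}
  card_eq := by
    have h1 : (some (i : ℚ) : FareyVertex) ≠ some ((i + 1 : ℤ) : ℚ) := by
      simp only [ne_eq, Option.some.injEq]
      intro h
      have : (i : ℚ) = (i : ℚ) + 1 := by push_cast at h ⊢; linarith
      linarith
    simp [Finset.card_insert_of_notMem, h1]
  neighbors := by
    intro x hx y hy hxy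
    have h1 := neighbor_int_succ i
    have h2 := neighbor_int_inf i
    have h3 := neighbor_int_inf (i + 1)
    simp only [Finset.mem_insert, Finset.mem_singleton] at hx hy
    rcases hx with rfl | rfl | rfl <;> rcases hy with rfl | rfl | rfl <;>
      first
        | exact absurd rfl hxy
        | assumption
        | exact neighbor_symm h1
        | exact neighbor_symm h2
        | exact neighbor_symm h3

/-- `S p q` is the sum of the partial quotients in the expansion of `p/q`
as a regular continued fraction (for coprime `p ≥ 0`, `q ≥ 1`), with `S 0 1 = 0`. -/
def S (p q : ℕ) : ℕ :=
  if h : q = 0 then 0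
  else p / q + S q (p % q)
termination_by q
decreasing_by exact Nat.mod_lt p (Nat.pos_of_ne_zero h)


/-!
Every Farey triangle is `{x, y, x ⊕ y}` for two Farey neighbours `x, y`, where `x ⊕ y` is the
mediant of the vectors `(fnum, fden)` (so `i ⊕ ∞ = i + 1` and `△⁽ⁱ⁾` has apex `i + 1`), and it is
determined by its apex `x ⊕ y`. The edges of `Σ` join `{x, y, x ⊕ y}` to its child
`{x, x ⊕ y, x ⊕ (x ⊕ y)}`. Passing to a child raises `apexDepth` of the apex by one, except along
the line of the triangles `△⁽ⁱ⁾`, where it is `|i|`; hence `apexDepth` of the apex is the distance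
to `△⁽⁰⁾`. For a positive apex `p/q` it equals `S(p,q) - 1`, because `S` of the sum of two
nonnegative unimodular vectors is one more than the larger of their `S`. A triangle containing
`p/q` either has apex `p/q`, and then it is unique, or has apex `p/q ⊕ y`, whose `S` exceeds
`S(p,q)`.
-/

@[simp] lemma S_zero_right (p : ℕ) : S p 0 = 0 := by
  rw [S]; simp

lemma S_of_pos {p q : ℕ} (hq : 0 < q) : S p q = p / q + S q (p % q) := by
  rw [S, dif_neg hq.ne']

lemma S_comm (p q : ℕ) : S p q = S q p := by
  rcases lt_trichotomy p q with h | rfl | h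
  · rw [S_of_pos (by omega), Nat.div_eq_of_lt h, Nat.mod_eq_of_lt h, zero_add]
  · rfl
  · rw [S_of_pos (p := q) (by omega), Nat.div_eq_of_lt h, Nat.mod_eq_of_lt h, zero_add]

@[simp] lemma S_zero_left (q : ℕ) : S 0 q = 0 := by
  rw [S_comm, S_zero_right]

@[simp] lemma S_one_right (p : ℕ) : S p 1 = p := by
  simp [S_of_pos, Nat.mod_one]

@[simp] lemma S_one_left (q : ℕ) : S 1 q = q := by
  rw [S_comm, S_one_right]

lemma S_add_right_self {p q : ℕ} (hq : 0 < q) : S (p + q) q = S p q + 1 := by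
  rw [S_of_pos hq, S_of_pos hq, Nat.add_div_right _ hq, Nat.add_mod_right]
  ring

lemma S_add_left_self {p q : ℕ} (hp : 0 < p) : S p (q + p) = S p q + 1 := by
  rw [S_comm, S_add_right_self hp, S_comm]

lemma one_le_S {p q : ℕ} (hp : 0 < p) (hq : 0 < q) : 1 ≤ S p q := by
  rcases le_total q p with h | h
  · obtain ⟨r, rfl⟩ := Nat.exists_eq_add_of_le' h
    rw [S_add_right_self hq]; omega
  · obtain ⟨r, rfl⟩ := Nat.exists_eq_add_of_le' h
    rw [S_add_left_self hp]; omega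

lemma S_two (k : ℕ) : S (2 * k + 1) 2 = k + 2 := by
  rw [S_of_pos two_pos, show (2 * k + 1) / 2 = k by omega, show (2 * k + 1) % 2 = 1 by omega,
    S_one_right]

theorem S_add_eq_max {a b c d : ℕ} (h : |(a : ℤ) * d - b * c| = 1) :
    S (a + c) (b + d) = max (S a b) (S c d) + 1 := by
  rcases Nat.eq_zero_or_pos b with rfl | hb
  · obtain ⟨rfl, rfl⟩ : a = 1 ∧ d = 1 := by rw [← mul_eq_one]; zify; simpa using h
    simp [add_comm]
  rcases Nat.eq_zero_or_pos d with rfl | hd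
  · obtain ⟨rfl, rfl⟩ : b = 1 ∧ c = 1 := by rw [← mul_eq_one]; zify; simpa using h
    simp
  rcases Nat.eq_zero_or_pos a with rfl | ha
  · obtain ⟨rfl, rfl⟩ : b = 1 ∧ c = 1 := by rw [← mul_eq_one]; zify; simpa using h
    simp [add_comm]
  rcases Nat.eq_zero_or_pos c with rfl | hc
  · obtain ⟨rfl, rfl⟩ : a = 1 ∧ d = 1 := by rw [← mul_eq_one]; zify; simpa using h
    simp
  have hsplit : (b ≤ a ∧ d ≤ c) ∨ (a ≤ b ∧ c ≤ d) := by
    have hle := abs_le.mp h.le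
    by_contra! hmix
    rcases lt_trichotomy a b with hab | rfl | hba
    · have hdc := hmix.2 hab.le
      nlinarith
    · exact absurd (hmix.1 le_rfl) (hmix.2 le_rfl).not_gt
    · have hcd := hmix.1 hba.le
      nlinarith
  -- the shear `(a, b) ↦ (a - b, b)` preserves the determinant and lowers `S` by one
  rcases hsplit with ⟨hba, hdc⟩ | ⟨hab, hcd⟩
  · obtain ⟨a, rfl⟩ := Nat.exists_eq_add_of_le' hba
    obtain ⟨c, rfl⟩ := Nat.exists_eq_add_of_le' hdc
    have ih := S_add_eq_max (a := a) (b := b) (c := c) (d := d)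
      (by convert h using 2; push_cast; ring)
    rw [show a + b + (c + d) = a + c + (b + d) by ring, S_add_right_self (by omega), ih,
      S_add_right_self hb, S_add_right_self hd]
    omega
  · obtain ⟨b, rfl⟩ := Nat.exists_eq_add_of_le' hab
    obtain ⟨d, rfl⟩ := Nat.exists_eq_add_of_le' hcd
    have ih := S_add_eq_max (a := a) (b := b) (c := c) (d := d)
      (by convert h using 2; push_cast; ring)
    rw [show b + a + (d + c) = b + d + (a + c) by ring, S_add_left_self (by omega), ih,
      S_add_left_self ha, S_add_left_self hc]
    omega
termination_by a + b + c + d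

lemma S_add_add_self {a b c d : ℕ} (h : |(a : ℤ) * d - b * c| = 1) :
    S (a + (a + c)) (b + (b + d)) = S (a + c) (b + d) + 1 := by
  have h' : |(a : ℤ) * ((b + d : ℕ) : ℤ) - b * ((a + c : ℕ) : ℤ)| = 1 := by
    rw [← h]; push_cast; ring_nf
  rw [S_add_eq_max h', S_add_eq_max h]
  omega

lemma S_lt_S_add {a b c d : ℕ} (h : |(a : ℤ) * d - b * c| = 1) : S a b < S (a + c) (b + d) := by
  rw [S_add_eq_max h]
  omega

lemma isCoprime_of_abs_det {a b c d : ℤ} (h : |a * d - b * c| = 1) : IsCoprime a b := by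
  rcases abs_eq zero_le_one |>.mp h with h | h
  · exact ⟨d, -c, by linarith⟩
  · exact ⟨-d, c, by linarith⟩

lemma nonneg_of_abs_det {a b c d : ℤ} (hb : 0 < b) (hd : 0 < d) (h : |a * d - b * c| = 1)
    (hac : 0 < a + c) : 0 ≤ a ∧ 0 ≤ c := by
  have := abs_le.mp h.le
  constructor <;> by_contra! <;> nlinarith

lemma eq_add_or_eq_sub_of_abs_det {a b c d e f : ℤ} (h₁ : |a * d - b * c| = 1)
    (h₂ : |a * f - b * e| = 1) (h₃ : |c * f - d * e| = 1) :
    (e = a + c ∧ f = b + d) ∨ (e = -a - c ∧ f = -b - d) ∨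
      (e = a - c ∧ f = b - d) ∨ (e = c - a ∧ f = d - b) := by
  -- Cramer's rule for `(e, f)` in the basis `(a, b), (c, d)`
  have he : (a * d - b * c) * e = (e * d - f * c) * a + (a * f - b * e) * c := by ring
  have hf : (a * d - b * c) * f = (e * d - f * c) * b + (a * f - b * e) * d := by ring
  have h₃' : |e * d - f * c| = 1 := by rw [← h₃, ← abs_neg]; ring_nf
  rcases abs_eq zero_le_one |>.mp h₁ with h₁ | h₁ <;>
    rcases abs_eq zero_le_one |>.mp h₂ with h₂ | h₂ <;>
    rcases abs_eq zero_le_one |>.mp h₃' with h₃ | h₃ <;>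
    rw [h₁, h₂, h₃] at he hf <;> omega

lemma SimpleGraph.dist_eq_of_potential {V : Type*} (G : SimpleGraph V) {v₀ : V} (f : V → ℕ)
    (hf₀ : f v₀ = 0) (hle : ∀ ⦃u v⦄, G.Adj u v → f u ≤ f v + 1)
    (hdesc : ∀ v, v ≠ v₀ → ∃ u, G.Adj v u ∧ f u + 1 = f v) (v : V) :
    G.dist v v₀ = f v := by
  have hwalk : ∀ n v, f v = n → ∃ p : G.Walk v v₀, p.length = n := by
    intro n
    induction n with
    | zero =>
      intro v hv
      by_cases hv₀ : v = v₀
      · subst hv₀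
        exact ⟨.nil, rfl⟩
      · obtain ⟨u, -, hu⟩ := hdesc v hv₀
        omega
    | succ n ih =>
      intro v hv
      obtain ⟨u, hadj, hu⟩ := hdesc v (by rintro rfl; omega)
      obtain ⟨p, hp⟩ := ih u (by omega)
      exact ⟨.cons hadj p, by simp [hp]⟩
  have hlen : ∀ {u w : V} (p : G.Walk u w), f u ≤ p.length + f w := by
    intro u w p
    induction p with
    | nil => simp
    | cons h p ih =>
      have := hle h
      simp only [SimpleGraph.Walk.length_cons]
      omega
  obtain ⟨p, hp⟩ := hwalk _ v rfl
  refine le_antisymm (hp ▸ G.dist_le p) ?_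
  obtain ⟨q, hq⟩ := p.reachable.exists_walk_length_eq_dist
  simpa [hq, hf₀] using hlen q

@[simp] lemma fnum_none : fnum none = 1 := rfl

@[simp] lemma fden_none : fden none = 0 := rfl

@[simp] lemma fnum_some (r : ℚ) : fnum (some r) = r.num := rfl

@[simp] lemma fden_some (r : ℚ) : fden (some r) = r.den := rfl

lemma fden_nonneg (v : FareyVertex) : 0 ≤ fden v := by
  cases v <;> simp [fden]

lemma fden_pos_of_ne_none {v : FareyVertex} (hv : v ≠ none) : 0 < fden v := by
  cases v with
  | none => exact absurd rfl hv
  | some r => simp [r.pos]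

lemma fden_pos_or_fnum_eq_one (v : FareyVertex) : 0 < fden v ∨ (fnum v = 1 ∧ fden v = 0) := by
  cases v with
  | none => simp
  | some r => simp [r.pos]

lemma fnum_eq_one_of_fden_eq_zero {v : FareyVertex} (h : fden v = 0) : fnum v = 1 := by
  rcases fden_pos_or_fnum_eq_one v with hv | hv <;> omega

lemma isCoprime_fnum_fden (v : FareyVertex) : IsCoprime (fnum v) (fden v) := by
  cases v with
  | none => exact isCoprime_one_left
  | some r => exact Int.isCoprime_iff_gcd_eq_one.mpr r.reduced

lemma vertex_ext {v w : FareyVertex} (hnum : fnum v = fnum w) (hden : fden v = fden w) :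
    v = w := by
  cases v with
  | none => cases w with
    | none => rfl
    | some s => have := s.pos; simp at hden; omega
  | some r => cases w with
    | none => simp [fden] at hden
    | some s =>
      simp only [fnum, fden, Nat.cast_inj] at hnum hden
      rw [Rat.ext hnum hden]

lemma vertex_ext_iff {v w : FareyVertex} : v = w ↔ fnum v = fnum w ∧ fden v = fden w :=
  ⟨by rintro rfl; exact ⟨rfl, rfl⟩, fun h => vertex_ext h.1 h.2⟩

lemma fnum_fden_mkFarey {a b : ℤ} (hb : 0 ≤ b) (h0 : b = 0 → a = 1) (hab : IsCoprime a b) :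
    fnum (mkFarey a b) = a ∧ fden (mkFarey a b) = b := by
  rcases hb.eq_or_lt with rfl | hb
  · simp [mkFarey, fnum, fden, h0 rfl]
  · have hcop : Nat.Coprime a.natAbs b.natAbs := Int.isCoprime_iff_gcd_eq_one.mp hab
    simp only [mkFarey, if_neg hb.ne', fnum, fden]
    exact ⟨Rat.num_div_eq_of_coprime hb hcop, Rat.den_div_eq_of_coprime hb hcop⟩

lemma fnum_fden_natCast_div {p q : ℕ} (hq : 0 < q) (hpq : Nat.Coprime p q) :
    fnum (some ((p : ℚ) / q)) = p ∧ fden (some ((p : ℚ) / q)) = q := by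
  have : some ((p : ℚ) / q) = mkFarey p q := by simp [mkFarey, hq.ne']
  rw [this]
  exact fnum_fden_mkFarey (by positivity) (by omega) (Nat.isCoprime_iff_coprime.mpr hpq)

lemma FareyNeighbor.ne {x y : FareyVertex} (h : FareyNeighbor x y) : x ≠ y := by
  rintro rfl
  simp [FareyNeighbor, mul_comm] at h

def mediant (x y : FareyVertex) : FareyVertex :=
  mkFarey (fnum x + fnum y) (fden x + fden y)

lemma mediant_comm (x y : FareyVertex) : mediant x y = mediant y x := by
  simp only [mediant, add_comm]

lemma fnum_fden_mediant {x y : FareyVertex} (h : FareyNeighbor x y) :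
    fnum (mediant x y) = fnum x + fnum y ∧ fden (mediant x y) = fden x + fden y := by
  have hx := fden_nonneg x
  have hy := fden_nonneg y
  refine fnum_fden_mkFarey (by omega) (fun h0 => ?_) (isCoprime_of_abs_det (c := fnum y)
    (d := fden y) (by rw [← h]; ring_nf))
  rw [FareyNeighbor, show fden x = 0 by omega, show fden y = 0 by omega] at h
  simp at h

lemma eq_mediant_iff {x y z : FareyVertex} (h : FareyNeighbor x y) :
    z = mediant x y ↔ fnum z = fnum x + fnum y ∧ fden z = fden x + fden y := by
  obtain ⟨hn, hd⟩ := fnum_fden_mediant h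
  exact ⟨by rintro rfl; exact ⟨hn, hd⟩,
    fun ⟨h₁, h₂⟩ => vertex_ext (h₁.trans hn.symm) (h₂.trans hd.symm)⟩

lemma neighbor_mediant_left {x y : FareyVertex} (h : FareyNeighbor x y) :
    FareyNeighbor x (mediant x y) := by
  obtain ⟨hn, hd⟩ := fnum_fden_mediant h
  unfold FareyNeighbor at h ⊢
  rw [hn, hd, ← h]
  ring_nf

lemma neighbor_mediant_right {x y : FareyVertex} (h : FareyNeighbor x y) :
    FareyNeighbor y (mediant x y) :=
  mediant_comm x y ▸ neighbor_mediant_left (neighbor_symm h)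

lemma mediant_cases {x y z : FareyVertex} (hxy : FareyNeighbor x y) (hxz : FareyNeighbor x z)
    (hyz : FareyNeighbor y z) : z = mediant x y ∨ x = mediant y z ∨ y = mediant x z := by
  simp only [eq_mediant_iff, hxy, hxz, hyz]
  have := fden_pos_or_fnum_eq_one x
  have := fden_pos_or_fnum_eq_one y
  have := fden_pos_or_fnum_eq_one z
  rcases eq_add_or_eq_sub_of_abs_det hxy hxz hyz with h | h | h | h
  · exact Or.inl h
  · exfalso
    exact hxy.ne (vertex_ext (by omega) (by omega))
  · right; left; omega
  · right; right; omega

lemma det_swap_eq_one {x y : FareyVertex} (h : FareyNeighbor x y)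
    (hxy : fnum x * fden y - fden x * fnum y ≠ 1) : fnum y * fden x - fden y * fnum x = 1 := by
  rcases abs_eq zero_le_one |>.mp h with h | h
  · exact absurd h hxy
  · linarith

lemma eq_of_add_eq_of_det_eq_one {x y x' y' : FareyVertex}
    (hn : fnum x + fnum y = fnum x' + fnum y') (hd : fden x + fden y = fden x' + fden y')
    (hxy : fnum x * fden y - fden x * fnum y = 1)
    (hxy' : fnum x' * fden y' - fden x' * fnum y' = 1) : x' = x ∧ y' = y := by
  -- Cramer's rule: `x' = x + k (x + y)` with `k = det (x, x')`; the denominators force `k = 0`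
  obtain ⟨k, hk⟩ : ∃ k, k = fnum x * fden x' - fden x * fnum x' := ⟨_, rfl⟩
  have e₁ : fnum x' = fnum x + k * (fnum x + fnum y) := by
    rw [hk]
    linear_combination (-fnum x') * hxy + fnum x * (hxy' + fnum x' * hd - fden x' * hn)
  have e₂ : fden x' = fden x + k * (fden x + fden y) := by
    rw [hk]
    linear_combination (-fden x') * hxy + fden x * (hxy' + fnum x' * hd - fden x' * hn)
  have hx := fden_pos_or_fnum_eq_one x
  have hy := fden_pos_or_fnum_eq_one y
  have hx' := fden_pos_or_fnum_eq_one x'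
  have hy' := fden_pos_or_fnum_eq_one y'
  have hZ : 0 < fden x + fden y := by
    by_contra hZ
    rw [show fden x = 0 by omega, show fden y = 0 by omega] at hxy
    simp at hxy
  rcases lt_trichotomy k 0 with hk₀ | rfl | hk₀
  · have := mul_le_mul_of_nonneg_right (show k ≤ -1 by omega) hZ.le
    have hy₀ : fden y = 0 := by omega
    have hx'₀ : fden x' = 0 := by omega
    obtain rfl : k = -1 := by
      rw [hy₀, add_zero, hx'₀] at e₂
      nlinarith
    omega
  · exact ⟨vertex_ext (by omega) (by omega), vertex_ext (by omega) (by omega)⟩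
  · have := mul_le_mul_of_nonneg_right (show 1 ≤ k by omega) hZ.le
    have hx₀ : fden x = 0 := by omega
    have hy'₀ : fden y' = 0 := by omega
    obtain rfl : k = 1 := by
      rw [hx₀, zero_add, show fden x' = fden y by omega] at e₂
      nlinarith
    omega


lemma exists_neighbors_add_eq {p q : ℤ} (hq : 0 < q) (hpq : IsCoprime p q) :
    ∃ x y, ∃ _ : FareyNeighbor x y, fnum x + fnum y = p ∧ fden x + fden y = q := by
  obtain ⟨u, v, huv⟩ := hpq
  have hb₀ := Int.emod_nonneg (-u) hq.ne'
  have hbq := Int.emod_lt_of_pos (-u) hq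
  have hb := Int.emod_def (-u) q
  set b := -u % q
  set a := v - (-u / q) * p
  have hab : a * q - b * p = 1 := by rw [hb]; linear_combination huv
  obtain ⟨hxn, hxd⟩ := fnum_fden_mkFarey (a := a) (b := b) hb₀
    (fun h0 => by
      rw [h0] at hab
      have := Int.eq_one_of_mul_eq_one_left hq.le (by linarith : a * q = 1)
      subst this
      linarith)
    (isCoprime_of_abs_det (c := p) (d := q) (by rw [hab, abs_one]))
  have hab' : (p - a) * q - (q - b) * p = -1 := by linear_combination -hab
  obtain ⟨hyn, hyd⟩ := fnum_fden_mkFarey (a := p - a) (b := q - b) (by omega) (by omega)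
    (isCoprime_of_abs_det (c := p) (d := q) (by rw [hab', abs_neg, abs_one]))
  refine ⟨mkFarey a b, mkFarey (p - a) (q - b), ?_, by omega, by omega⟩
  unfold FareyNeighbor
  rw [hxn, hxd, hyn, hyd, ← abs_one (α := ℤ), ← hab]
  ring_nf

/-- The distance to `△⁽⁰⁾` of the Farey triangle with apex `p/q`; for `q = 1` this is
`△⁽ᵖ⁻¹⁾`. -/
def apexDepth (p q : ℤ) : ℕ :=
  if q ≤ 1 then (p - 1).natAbs
  else if 0 < p then S p.toNat q.toNat - 1 else S (-p).toNat q.toNat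

lemma apexDepth_one (p : ℤ) : apexDepth p 1 = (p - 1).natAbs := by
  simp [apexDepth]

lemma apexDepth_natCast {p q : ℕ} (hp : 0 < p) (hq : 2 ≤ q) : apexDepth p q = S p q - 1 := by
  simp [apexDepth, show ¬ (q : ℤ) ≤ 1 by omega, hp]

lemma apexDepth_neg_natCast (p : ℕ) {q : ℕ} (hq : 2 ≤ q) : apexDepth (-p) q = S p q := by
  simp [apexDepth, show ¬ (q : ℤ) ≤ 1 by omega]

lemma apexDepth_two (a : ℤ) : apexDepth (2 * a + 1) 2 = a.natAbs + 1 := by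
  rcases le_or_gt 0 a with ha | ha
  · lift a to ℕ using ha
    rw [show 2 * (a : ℤ) + 1 = ((2 * a + 1 : ℕ) : ℤ) by push_cast; ring,
      show (2 : ℤ) = ((2 : ℕ) : ℤ) by rfl, apexDepth_natCast (by omega) le_rfl, S_two]
    simp
  · obtain ⟨n, rfl⟩ : ∃ n : ℕ, a = -(n + 1 : ℕ) := ⟨(-a - 1).toNat, by omega⟩
    rw [show 2 * -((n + 1 : ℕ) : ℤ) + 1 = -((2 * n + 1 : ℕ) : ℤ) by push_cast; ring,
      show (2 : ℤ) = ((2 : ℕ) : ℤ) by rfl, apexDepth_neg_natCast _ le_rfl, S_two]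
    omega

lemma apexDepth_add_add_self {a b c d : ℤ} (hb : 0 < b) (hd : 0 ≤ d) (hc : d = 0 → c = 1)
    (h : |a * d - b * c| = 1) :
    apexDepth (a + (a + c)) (b + (b + d)) = apexDepth (a + c) (b + d) + 1 := by
  rcases hd.eq_or_lt with rfl | hd
  · obtain rfl := hc rfl
    obtain rfl : b = 1 := by simpa [abs_of_pos hb] using h
    rw [show a + (a + 1) = 2 * a + 1 by ring, show (1 + (1 + 0) : ℤ) = 2 by rfl, apexDepth_two,
      show (1 + 0 : ℤ) = 1 by rfl, apexDepth_one]
    omega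
  have hac : a + c ≠ 0 := by
    intro hac
    have hcop := isCoprime_of_abs_det (a := a + c) (b := b + d) (c := c) (d := d)
      (by rw [← h]; ring_nf)
    rw [hac, isCoprime_zero_left, Int.isUnit_iff] at hcop
    omega
  lift b to ℕ using hb.le
  lift d to ℕ using hd.le
  have hb2 : 2 ≤ b + (b + d) := by omega
  rcases hac.lt_or_gt with hneg | hpos
  · obtain ⟨ha, hc⟩ := nonneg_of_abs_det (a := -a) (c := -c) hb hd
      (by rw [← h, ← abs_neg]; ring_nf) (by omega)
    obtain ⟨a, rfl⟩ : ∃ n : ℕ, a = -n := ⟨(-a).toNat, by omega⟩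
    obtain ⟨c, rfl⟩ : ∃ n : ℕ, c = -n := ⟨(-c).toNat, by omega⟩
    have h' : |(a : ℤ) * d - b * c| = 1 := by rw [← h, ← abs_neg]; ring_nf
    simp only [← neg_add, ← Nat.cast_add]
    rw [apexDepth_neg_natCast _ hb2, apexDepth_neg_natCast _ (by omega), S_add_add_self h']
  · obtain ⟨ha, hc⟩ := nonneg_of_abs_det hb hd h hpos
    lift a to ℕ using ha
    lift c to ℕ using hc
    have hS := S_lt_S_add h
    simp only [← Nat.cast_add]
    rw [apexDepth_natCast (by omega) hb2, apexDepth_natCast (by omega) (by omega),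
      S_add_add_self h]
    omega

lemma apexDepth_add_one {p q : ℕ} (hp : 0 < p) (hq : 0 < q) : apexDepth p q + 1 = S p q := by
  rcases (show q = 1 ∨ 2 ≤ q by omega) with rfl | hq
  · rw [Nat.cast_one, apexDepth_one, S_one_right]
    omega
  · rw [apexDepth_natCast hp hq]
    have := one_le_S hp (by omega : 0 < q)
    omega

lemma S_le_apexDepth_add {p q : ℕ} {c d : ℤ} (hp : 0 < p) (hq : 0 < q) (hd : 0 ≤ d)
    (hc : d = 0 → c = 1) (h : |(p : ℤ) * d - q * c| = 1) :
    S p q ≤ apexDepth (p + c) (q + d) := by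
  have hc₀ : 0 ≤ c := by
    rcases hd.eq_or_lt with rfl | hd
    · simp [hc rfl]
    · have := abs_le.mp h.le
      by_contra!
      nlinarith
  lift c to ℕ using hc₀
  lift d to ℕ using hd
  rcases (show q + d = 1 ∨ 2 ≤ q + d by omega) with hqd | hqd
  · obtain ⟨rfl, rfl⟩ : q = 1 ∧ d = 0 := by omega
    obtain rfl : c = 1 := by exact_mod_cast hc rfl
    rw [Nat.cast_one, Nat.cast_zero, add_zero, apexDepth_one, S_one_right]
    omega
  · rw [← Nat.cast_add, ← Nat.cast_add, apexDepth_natCast (by omega) hqd]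
    have := S_lt_S_add h
    omega

namespace FareyTriangle

def ofNeighbors (x y : FareyVertex) (h : FareyNeighbor x y) : FareyTriangle where
  verts := {x, y, mediant x y}
  card_eq := Finset.card_eq_three.mpr
    ⟨x, y, _, h.ne, (neighbor_mediant_left h).ne, (neighbor_mediant_right h).ne, rfl⟩
  neighbors := by
    have hx := neighbor_mediant_left h
    have hy := neighbor_mediant_right h
    simp only [Finset.mem_insert, Finset.mem_singleton]
    rintro u (rfl | rfl | rfl) v (rfl | rfl | rfl) huv <;>
      first
        | exact absurd rfl huv
        | assumption
        | exact neighbor_symm ‹_›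

lemma ofNeighbors_comm {x y : FareyVertex} (h : FareyNeighbor x y) :
    ofNeighbors x y h = ofNeighbors y x (neighbor_symm h) := by
  ext1
  simp only [ofNeighbors, mediant_comm x y, Finset.insert_comm x y]

lemma exists_eq_ofNeighbors (T : FareyTriangle) :
    ∃ x y h, T = ofNeighbors x y h := by
  obtain ⟨x, y, z, hxy, hxz, hyz, hT⟩ := Finset.card_eq_three.mp T.card_eq
  have hn : ∀ u ∈ ({x, y, z} : Finset _), ∀ v ∈ ({x, y, z} : Finset _), u ≠ v →
      FareyNeighbor u v := hT ▸ T.neighbors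
  have hnxy := hn x (by simp) y (by simp) hxy
  have hnxz := hn x (by simp) z (by simp) hxz
  have hnyz := hn y (by simp) z (by simp) hyz
  rcases mediant_cases hnxy hnxz hnyz with rfl | rfl | rfl
  · exact ⟨x, y, hnxy, FareyTriangle.ext hT⟩
  · refine ⟨y, z, hnyz, FareyTriangle.ext (hT.trans ?_)⟩
    ext; simp only [ofNeighbors, Finset.mem_insert, Finset.mem_singleton]; tauto
  · refine ⟨x, z, hnxz, FareyTriangle.ext (hT.trans ?_)⟩
    ext; simp only [ofNeighbors, Finset.mem_insert, Finset.mem_singleton]; tauto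

lemma ofNeighbors_eq_of_add_eq {x y x' y' : FareyVertex} (h : FareyNeighbor x y)
    (h' : FareyNeighbor x' y') (hn : fnum x + fnum y = fnum x' + fnum y')
    (hd : fden x + fden y = fden x' + fden y') : ofNeighbors x y h = ofNeighbors x' y' h' := by
  wlog hxy : fnum x * fden y - fden x * fnum y = 1 generalizing x y with H
  · rw [ofNeighbors_comm h]
    exact H (neighbor_symm h) (by omega) (by omega) (det_swap_eq_one h hxy)
  wlog hxy' : fnum x' * fden y' - fden x' * fnum y' = 1 generalizing x' y' with H
  · rw [ofNeighbors_comm h']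
    exact H (neighbor_symm h') (by omega) (by omega) (det_swap_eq_one h' hxy')
  obtain ⟨rfl, rfl⟩ := eq_of_add_eq_of_det_eq_one hn hd hxy hxy'
  rfl

lemma stdTriangle_eq_ofNeighbors (i : ℤ) :
    stdTriangle i = ofNeighbors (some (i : ℚ)) none (neighbor_int_inf i) := by
  have hm : some ((i + 1 : ℤ) : ℚ) = mediant (some (i : ℚ)) none :=
    (eq_mediant_iff (neighbor_int_inf i)).mpr
      ⟨by simp only [fnum_some, fnum_none, Rat.num_intCast], by simp⟩
  ext1
  simp only [stdTriangle, ofNeighbors, ← hm, Finset.pair_comm]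

lemma ofNeighbors_none_right {x : FareyVertex} (h : FareyNeighbor x none) :
    ofNeighbors x none h = stdTriangle (fnum x) := by
  have hden : fden x = 1 := by
    simpa [FareyNeighbor, abs_of_nonneg (fden_nonneg x)] using h
  have hx : some ((fnum x : ℤ) : ℚ) = x := vertex_ext (by simp) (by simp [hden])
  rw [stdTriangle_eq_ofNeighbors]
  ext1
  simp only [ofNeighbors, hx]

def child (x y : FareyVertex) (h : FareyNeighbor x y) : FareyTriangle :=
  ofNeighbors x (mediant x y) (neighbor_mediant_left h)

lemma child_none {y : FareyVertex} (h : FareyNeighbor none y) :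
    child none y h = stdTriangle (fnum y + 1) := by
  obtain ⟨hn, -⟩ := fnum_fden_mediant h
  rw [child, ofNeighbors_comm, ofNeighbors_none_right, hn, fnum_none, add_comm]

lemma adj_child {x y : FareyVertex} (h : FareyNeighbor x y) :
    fareyTree.Adj (ofNeighbors x y h) (child x y h) := by
  have hm := neighbor_mediant_left h
  have hy : y ≠ mediant x (mediant x y) := by
    obtain ⟨hn, hd⟩ := fnum_fden_mediant h
    obtain ⟨hn', hd'⟩ := fnum_fden_mediant hm
    have := fden_pos_or_fnum_eq_one x
    intro hy
    have h1 := congrArg fnum hy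
    have h2 := congrArg fden hy
    rw [hn', hn] at h1
    rw [hd', hd] at h2
    omega
  have hxm := (neighbor_mediant_left hm).ne
  have hmm := (neighbor_mediant_right hm).ne
  have hxy := h.ne
  have hym := (neighbor_mediant_right h).ne
  show ({x, y, mediant x y} ∩ {x, mediant x y, mediant x (mediant x y)} : Finset _).card = 2
  rw [Finset.card_eq_two]
  refine ⟨x, mediant x y, hm.ne, ?_⟩
  ext a
  simp only [Finset.mem_inter, Finset.mem_insert, Finset.mem_singleton]
  grind

lemma adj_stdTriangle_succ (i : ℤ) : fareyTree.Adj (stdTriangle i) (stdTriangle (i + 1)) := by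
  have h := neighbor_symm (neighbor_int_inf i)
  have := adj_child h
  rwa [child_none, ofNeighbors_comm, ofNeighbors_none_right, fnum_some, Rat.num_intCast] at this

lemma exists_eq_child {x y : FareyVertex} (h : FareyNeighbor x y) (hx : x ≠ none)
    (hy : y ≠ none) :
    ∃ a b, ∃ hab : FareyNeighbor a b, a ≠ none ∧ ofNeighbors x y h = child a b hab := by
  wlog hlt : fden y < fden x ∨ (fden y = fden x ∧ fnum y < fnum x) generalizing x y with H
  · have hne := vertex_ext_iff.not.mp h.ne
    obtain ⟨a, b, hab, ha, he⟩ := H (neighbor_symm h) hy hx (by omega)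
    exact ⟨a, b, hab, ha, (ofNeighbors_comm h).trans he⟩
  have hdet : |fnum x * fden y - fden x * fnum y| = 1 := h
  obtain ⟨hbn, hbd⟩ := fnum_fden_mkFarey (a := fnum x - fnum y) (b := fden x - fden y)
    (by omega)
    (fun h0 => by
      rw [show fden x = fden y by omega, show fnum x * fden y - fden y * fnum y =
        fden y * (fnum x - fnum y) by ring, abs_mul, abs_of_nonneg (fden_nonneg y),
        abs_of_pos (by omega)] at hdet
      exact Int.eq_one_of_mul_eq_one_left (by omega) hdet)
    (isCoprime_of_abs_det (c := fnum y) (d := fden y) (by rw [← hdet]; ring_nf))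
  have hyb : FareyNeighbor y (mkFarey (fnum x - fnum y) (fden x - fden y)) := by
    unfold FareyNeighbor
    rw [hbn, hbd, ← hdet, ← abs_neg]
    ring_nf
  have hm : x = mediant y (mkFarey (fnum x - fnum y) (fden x - fden y)) :=
    (eq_mediant_iff hyb).mpr ⟨by omega, by omega⟩
  refine ⟨y, _, hyb, hy, FareyTriangle.ext ?_⟩
  simp only [ofNeighbors, child, ← hm, mediant_comm y x, Finset.insert_comm x y]

lemma exists_verts_of_adj {T T' : FareyTriangle} (h : fareyTree.Adj T T') :
    ∃ u v z z', u ≠ v ∧ z ∉ ({u, v} : Finset _) ∧ z' ∉ ({u, v} : Finset _) ∧ z ≠ z' ∧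
      T.verts = {z, u, v} ∧ T'.verts = {z', u, v} := by
  have hcard : (T.verts ∩ T'.verts).card = 2 := h
  obtain ⟨u, v, huv, hI⟩ := Finset.card_eq_two.mp hcard
  obtain ⟨z, hz, hzT⟩ := Finset.exists_eq_insert_iff.mpr
    ⟨Finset.inter_subset_left, by rw [hcard, T.card_eq]⟩
  obtain ⟨z', hz', hzT'⟩ := Finset.exists_eq_insert_iff.mpr
    ⟨Finset.inter_subset_right, by rw [hcard, T'.card_eq]⟩
  refine ⟨u, v, z, z', huv, hI ▸ hz, hI ▸ hz', ?_, by rw [← hzT, hI], by rw [← hzT', hI]⟩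
  rintro rfl
  exact hz (Finset.mem_inter.mpr
    ⟨hzT ▸ Finset.mem_insert_self _ _, hzT' ▸ Finset.mem_insert_self _ _⟩)

lemma neighbors_of_verts_eq {T : FareyTriangle} {u v w : FareyVertex}
    (hT : T.verts = {w, u, v}) (huv : u ≠ v) (hwu : w ≠ u) (hwv : w ≠ v) :
    FareyNeighbor u v ∧ FareyNeighbor u w ∧ FareyNeighbor v w :=
  ⟨T.neighbors u (by simp [hT]) v (by simp [hT]) huv,
    T.neighbors u (by simp [hT]) w (by simp [hT]) hwu.symm,
    T.neighbors v (by simp [hT]) w (by simp [hT]) hwv.symm⟩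

lemma eq_child_of_verts {T T' : FareyTriangle} {u v z z' : FareyVertex}
    (h : FareyNeighbor v z') (hu : u = mediant v z') (hz : z = mediant u v)
    (hT : T.verts = {z, u, v}) (hT' : T'.verts = {z', u, v}) :
    T' = ofNeighbors v z' h ∧ T = child v z' h := by
  subst hu hz
  constructor <;> ext1 <;> simp only [hT, hT'] <;> ext <;>
    simp only [ofNeighbors, child, mediant_comm v, Finset.mem_insert, Finset.mem_singleton] <;>
    tauto

lemma exists_eq_child_of_adj {T T' : FareyTriangle} (h : fareyTree.Adj T T') :
    ∃ x y, ∃ hxy : FareyNeighbor x y, (T = ofNeighbors x y hxy ∧ T' = child x y hxy) ∨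
      (T' = ofNeighbors x y hxy ∧ T = child x y hxy) := by
  obtain ⟨u, v, z, z', huv, hz, hz', hzz', hT, hT'⟩ := exists_verts_of_adj h
  simp only [Finset.mem_insert, Finset.mem_singleton, not_or] at hz hz'
  obtain ⟨huv, huz, hvz⟩ := neighbors_of_verts_eq hT huv hz.1 hz.2
  obtain ⟨-, huz', hvz'⟩ := neighbors_of_verts_eq hT' huv.ne hz'.1 hz'.2
  wlog hzm : z = mediant u v generalizing T T' z z' with H
  · rcases mediant_cases huv huz' hvz' with hz'm | h'' | h''
    · obtain ⟨x, y, hxy, hc⟩ :=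
        H h.symm z' z (Ne.symm hzz') hT' hT hz' hz huz' hvz' huz hvz hz'm
      exact ⟨x, y, hxy, hc.symm⟩
    all_goals
      exfalso
      have hne := vertex_ext_iff.not.mp hzz'
      have := fden_pos_or_fnum_eq_one z
      have := fden_pos_or_fnum_eq_one z'
      rcases mediant_cases huv huz hvz with h' | h' | h'
      · exact hzm h'
      all_goals
        simp only [eq_mediant_iff hvz, eq_mediant_iff huz, eq_mediant_iff hvz',
          eq_mediant_iff huz'] at h' h''
        omega
  · rcases mediant_cases huv huz' hvz' with hz'm | hu | hv
    · exact absurd (hzm.trans hz'm.symm) hzz'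
    · exact ⟨v, z', hvz', Or.inr (eq_child_of_verts hvz' hu hzm hT hT')⟩
    · refine ⟨u, z', huz',
        Or.inr (eq_child_of_verts huz' hv (hzm.trans (mediant_comm u v)) ?_ ?_)⟩
      · rw [hT, Finset.pair_comm]
      · rw [hT', Finset.pair_comm]

/-- The vectors `(fnum v, fden v)` of the vertices of a Farey triangle add up to twice the
vector of its apex. -/
def depth (T : FareyTriangle) : ℕ :=
  apexDepth ((∑ v ∈ T.verts, fnum v) / 2) ((∑ v ∈ T.verts, fden v) / 2)

lemma depth_ofNeighbors {x y : FareyVertex} (h : FareyNeighbor x y) :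
    (ofNeighbors x y h).depth = apexDepth (fnum x + fnum y) (fden x + fden y) := by
  obtain ⟨hn, hd⟩ := fnum_fden_mediant h
  have hx : x ∉ ({y, mediant x y} : Finset _) := by
    simp [h.ne, (neighbor_mediant_left h).ne]
  have hy : y ∉ ({mediant x y} : Finset _) := by
    simp [(neighbor_mediant_right h).ne]
  simp only [depth, ofNeighbors, Finset.sum_insert hx, Finset.sum_insert hy,
    Finset.sum_singleton, hn, hd]
  congr 1 <;> omega

lemma depth_stdTriangle (i : ℤ) : (stdTriangle i).depth = i.natAbs := by
  rw [stdTriangle_eq_ofNeighbors, depth_ofNeighbors]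
  simp [apexDepth_one]

lemma depth_child {x y : FareyVertex} (h : FareyNeighbor x y) (hx : x ≠ none) :
    (child x y h).depth = (ofNeighbors x y h).depth + 1 := by
  obtain ⟨hn, hd⟩ := fnum_fden_mediant h
  rw [child, depth_ofNeighbors, depth_ofNeighbors, hn, hd]
  exact apexDepth_add_add_self (fden_pos_of_ne_none hx) (fden_nonneg y)
    fnum_eq_one_of_fden_eq_zero h

lemma depth_child_or {x y : FareyVertex} (h : FareyNeighbor x y) :
    (child x y h).depth = (ofNeighbors x y h).depth + 1 ∨
      (ofNeighbors x y h).depth = (child x y h).depth + 1 := by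
  by_cases hx : x = none
  · subst hx
    rw [child_none, ofNeighbors_comm, ofNeighbors_none_right, depth_stdTriangle,
      depth_stdTriangle]
    omega
  · exact Or.inl (depth_child h hx)

lemma depth_le_of_adj {T T' : FareyTriangle} (h : fareyTree.Adj T T') :
    T.depth ≤ T'.depth + 1 := by
  obtain ⟨x, y, hxy, ⟨rfl, rfl⟩ | ⟨rfl, rfl⟩⟩ := exists_eq_child_of_adj h <;>
    rcases depth_child_or hxy with h' | h' <;> omega

lemma exists_adj_depth_succ_of_stdTriangle {i : ℤ} (hi : i ≠ 0) :
    ∃ T, fareyTree.Adj (stdTriangle i) T ∧ T.depth + 1 = (stdTriangle i).depth := by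
  rcases hi.lt_or_gt with hi | hi
  · refine ⟨stdTriangle (i + 1), adj_stdTriangle_succ i, ?_⟩
    simp only [depth_stdTriangle]
    omega
  · refine ⟨stdTriangle (i - 1), ?_, ?_⟩
    · simpa using (adj_stdTriangle_succ (i - 1)).symm
    · simp only [depth_stdTriangle]
      omega

lemma exists_adj_depth_succ {T : FareyTriangle} (hT : T ≠ stdTriangle 0) :
    ∃ T', fareyTree.Adj T T' ∧ T'.depth + 1 = T.depth := by
  obtain ⟨x, y, h, rfl⟩ := T.exists_eq_ofNeighbors
  by_cases hx : x = none
  · subst hx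
    rw [ofNeighbors_comm, ofNeighbors_none_right] at hT ⊢
    exact exists_adj_depth_succ_of_stdTriangle (by rintro h; exact hT (h ▸ rfl))
  by_cases hy : y = none
  · subst hy
    rw [ofNeighbors_none_right] at hT ⊢
    exact exists_adj_depth_succ_of_stdTriangle (by rintro h; exact hT (h ▸ rfl))
  obtain ⟨a, b, hab, ha, he⟩ := exists_eq_child h hx hy
  rw [he]
  exact ⟨ofNeighbors a b hab, (adj_child hab).symm, (depth_child hab ha).symm⟩

theorem dist_stdTriangle_zero (T : FareyTriangle) :
    fareyTree.dist T (stdTriangle 0) = T.depth :=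
  fareyTree.dist_eq_of_potential depth (by simp [depth_stdTriangle])
    (fun _ _ h => depth_le_of_adj h) (fun _ hT => exists_adj_depth_succ hT) T

lemma S_le_depth_ofNeighbors {x y : FareyVertex} (h : FareyNeighbor x y) {p q : ℕ}
    (hp : 0 < p) (hq : 0 < q) (hxp : fnum x = p) (hxq : fden x = q) :
    S p q ≤ (ofNeighbors x y h).depth := by
  rw [depth_ofNeighbors, hxp, hxq]
  exact S_le_apexDepth_add hp hq (fden_nonneg y) fnum_eq_one_of_fden_eq_zero
    (by rw [← hxp, ← hxq]; exact h)

lemma exists_min_depth_mem {v : FareyVertex} {p q : ℕ} (hp : 0 < p) (hq : 0 < q)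
    (hvp : fnum v = p) (hvq : fden v = q) :
    ∃ Tm : FareyTriangle, v ∈ Tm.verts ∧ Tm.depth + 1 = S p q ∧
      ∀ T : FareyTriangle, v ∈ T.verts → T = Tm ∨ S p q ≤ T.depth := by
  obtain ⟨x, y, h, hn, hd⟩ :=
    exists_neighbors_add_eq (p := p) (q := q) (by omega) (hvp ▸ hvq ▸ isCoprime_fnum_fden v)
  have hv : v = mediant x y := (eq_mediant_iff h).mpr ⟨by omega, by omega⟩
  refine ⟨ofNeighbors x y h, by simp [ofNeighbors, hv], ?_, fun T hT => ?_⟩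
  · rw [depth_ofNeighbors, hn, hd]
    exact apexDepth_add_one hp hq
  obtain ⟨x', y', h', rfl⟩ := T.exists_eq_ofNeighbors
  simp only [ofNeighbors, Finset.mem_insert, Finset.mem_singleton] at hT
  rcases hT with rfl | rfl | rfl
  · exact Or.inr (S_le_depth_ofNeighbors h' hp hq hvp hvq)
  · rw [ofNeighbors_comm]
    exact Or.inr (S_le_depth_ofNeighbors _ hp hq hvp hvq)
  · obtain ⟨hn', hd'⟩ := fnum_fden_mediant h'
    exact Or.inl (ofNeighbors_eq_of_add_eq h' h (by omega) (by omega))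

end FareyTriangle

open FareyTriangle

theorem dist_closest_triangle_eq_S_sub_one (p q : ℕ) (hp : 1 ≤ p) (hq : 1 ≤ q)
    (hpq : Nat.Coprime p q) :
    (∃! Tm : FareyTriangle, some ((p : ℚ) / (q : ℚ)) ∈ Tm.verts ∧
        ∀ T' : FareyTriangle, some ((p : ℚ) / (q : ℚ)) ∈ T'.verts →
          fareyTree.dist Tm (stdTriangle 0) ≤ fareyTree.dist T' (stdTriangle 0)) ∧
    ∀ Tm : FareyTriangle, some ((p : ℚ) / (q : ℚ)) ∈ Tm.verts →
      (∀ T' : FareyTriangle, some ((p : ℚ) / (q : ℚ)) ∈ T'.verts →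
        fareyTree.dist Tm (stdTriangle 0) ≤ fareyTree.dist T' (stdTriangle 0)) →
      (fareyTree.dist Tm (stdTriangle 0) : ℤ) = (S p q : ℤ) - 1 := by
  obtain ⟨hvp, hvq⟩ := fnum_fden_natCast_div hq hpq
  obtain ⟨Tm, hmem, hdepth, hmin⟩ := exists_min_depth_mem hp hq hvp hvq
  simp only [dist_stdTriangle_zero]
  refine ⟨⟨Tm, ⟨hmem, fun T hT => ?_⟩, fun T ⟨hT, hle⟩ => ?_⟩, fun T hT hle => ?_⟩
  · rcases hmin T hT with rfl | h <;> omega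
  · rcases hmin T hT with h | h
    · exact h
    · have := hle Tm hmem
      omega
  · have := hle Tm hmem
    rcases hmin T hT with rfl | h <;> omega
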